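/- arXiv:quant-ph/0303169 — 3 statements merged into one kernel-verified Lean document; each statement's English description precedes it below -/
import Mathlib

section
/- With f as above (f(2i) = 2i + 2 + x_i and f(2i+1) = 2i + 3 − x_i mod 2p), the permutation f consists of a single cycle if the parity of x (the sum of the bits x_i mod 2) is odd, and of exactly two cycles if the parity is even. -/
/-!
Write `v = 2 i + b` with `b ∈ {0, 1}`. Then `f` sends `(i, b)` to `(i + 1, b xor xᵢ)`, indices
taken mod `p`, so starting from `b ∈ {0, 1}` the `k`-th iterate for `k ≤ p` is
`2 k + (b + x₀ + ⋯ + x_{k-1}) mod 2`. Every vertex therefore lies on the orbit of `0` or of `1`,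
and `f^[p]` adds the parity of `x` to `b`. If the parity is odd, `f^[p] 0 = 1` and there is one
orbit. If it is even, `0` and `1` are periodic with period `p`, and their orbits
`{2 k + (b + x₀ + ⋯ + x_{k-1}) mod 2 : k < p}` for `b = 0, 1` are disjoint.
-/

/-- The orbit equivalence relation of a function `f` on a type: two points are
equivalent iff some forward iterates of `f` send them to the same point.  For a
permutation of a finite type, the equivalence classes are exactly the cycles of
the cycle decomposition (fixed points counted as cycles). -/
def orbitSetoid {α : Type _} (f : α → α) : Setoid α where
  r a b := ∃ n m : ℕ, f^[n] a = f^[m] b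
  iseqv := by
    constructor
    · exact fun a => ⟨0, 0, rfl⟩
    · rintro a b ⟨n, m, h⟩; exact ⟨m, n, h.symm⟩
    · rintro a b c ⟨n, m, h1⟩ ⟨n', m', h2⟩
      refine ⟨n' + n, m + m', ?_⟩
      calc f^[n' + n] a = f^[n'] (f^[n] a) := Function.iterate_add_apply f n' n a
        _ = f^[n'] (f^[m] b) := by rw [h1]
        _ = f^[n' + m] b := (Function.iterate_add_apply f n' m b).symm
        _ = f^[m + n'] b := by rw [Nat.add_comm]
        _ = f^[m] (f^[n'] b) := Function.iterate_add_apply f m n' b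
        _ = f^[m] (f^[m'] c) := by rw [h2]
        _ = f^[m + m'] c := (Function.iterate_add_apply f m m' c).symm

theorem Setoid.card_quotient_eq_of_transversal {α β : Type*} {s : Setoid α} (e : β → α)
    (hcover : ∀ a, ∃ b, s a (e b)) (hsep : ∀ b b', s (e b) (e b') → b = b') :
    Nat.card (Quotient s) = Nat.card β := by
  refine (Nat.card_eq_of_bijective (fun b => ⟦e b⟧) ⟨fun b b' h => hsep b b' ?_, ?_⟩).symm
  · exact Quotient.exact h
  · rintro ⟨a⟩
    obtain ⟨b, hb⟩ := hcover a
    exact ⟨b, Quotient.sound (s.symm' hb)⟩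

section ParityShift

variable {p : ℕ} (x : Fin p → Bool)

def bitAt (j : ℕ) : ℕ := if h : j < p then (x ⟨j, h⟩).toNat else 0

def bitPrefixSum (k : ℕ) : ℕ := ∑ j ∈ Finset.range k, bitAt x j

theorem bitPrefixSum_succ (k : ℕ) : bitPrefixSum x (k + 1) = bitPrefixSum x k + bitAt x k :=
  Finset.sum_range_succ _ _

theorem bitPrefixSum_self : bitPrefixSum x p = ∑ i, (x i).toNat := by
  rw [bitPrefixSum, ← Fin.sum_univ_eq_sum_range]
  exact Finset.sum_congr rfl fun i _ => dif_pos i.isLt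

variable {x} {f : Fin (2 * p) → Fin (2 * p)}

theorem val_apply_of_even_odd
    (hf : ∀ i : Fin p,
      f ⟨2 * i.val, by have := i.isLt; omega⟩ =
        ⟨(2 * i.val + 2 + (x i).toNat) % (2 * p), Nat.mod_lt _ (by have := i.isLt; omega)⟩ ∧
      f ⟨2 * i.val + 1, by have := i.isLt; omega⟩ =
        ⟨(2 * i.val + 3 - (x i).toNat) % (2 * p), Nat.mod_lt _ (by have := i.isLt; omega)⟩)
    (v : Fin (2 * p)) :
    (f v).val = (2 * (v / 2 + 1) + (v % 2 + bitAt x (v / 2)) % 2) % (2 * p) := by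
  have hi : v / 2 < p := by omega
  have hbit : bitAt x (v / 2) = (x ⟨v / 2, hi⟩).toNat := dif_pos hi
  have hle := Bool.toNat_le (x ⟨v / 2, hi⟩)
  obtain ⟨hev, hodd⟩ := hf ⟨v / 2, hi⟩
  rw [hbit]
  rcases Nat.mod_two_eq_zero_or_one v with h | h
  · rw [congrArg f (show v = ⟨2 * (v / 2), by omega⟩ from Fin.ext (by dsimp only; omega)), hev]
    dsimp only
    congr 1
    omega
  · rw [congrArg f (show v = ⟨2 * (v / 2) + 1, by omega⟩ from Fin.ext (by dsimp only; omega)),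
      hodd]
    dsimp only
    congr 1
    omega

variable (hf : ∀ v : Fin (2 * p),
  (f v).val = (2 * (v / 2 + 1) + (v % 2 + bitAt x (v / 2)) % 2) % (2 * p))
include hf

theorem val_iterate_of_le {k : ℕ} (hk : k ≤ p) {v : Fin (2 * p)} (hv : v.val < 2) :
    (f^[k] v).val = (2 * k + (v + bitPrefixSum x k) % 2) % (2 * p) := by
  induction k with
  | zero => simp [bitPrefixSum, Nat.mod_eq_of_lt hv, Nat.mod_eq_of_lt v.isLt]
  | succ k ih =>
    have hlt : 2 * k + (v + bitPrefixSum x k) % 2 < 2 * p := by omega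
    have hdiv : (2 * k + (v + bitPrefixSum x k) % 2) / 2 = k := by omega
    rw [Function.iterate_succ_apply', hf, ih (by omega), Nat.mod_eq_of_lt hlt, hdiv,
      bitPrefixSum_succ]
    congr 2
    omega

theorem exists_orbitSetoid_castLE (hp : 1 ≤ p) (v : Fin (2 * p)) :
    ∃ b : Fin 2, orbitSetoid f v (Fin.castLE (by omega) b) := by
  refine ⟨⟨(v % 2 + bitPrefixSum x (v / 2)) % 2, by omega⟩, 0, v / 2, Fin.ext ?_⟩
  rw [Function.iterate_zero_apply,
    val_iterate_of_le hf (by omega) (by simp only [Fin.val_castLE]; omega)]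
  simp only [Fin.val_castLE]
  rw [Nat.mod_eq_of_lt (by omega)]
  omega

theorem val_iterate_self {v : Fin (2 * p)} (hv : v.val < 2) :
    (f^[p] v).val = (v + bitPrefixSum x p) % 2 := by
  rw [val_iterate_of_le hf le_rfl hv, Nat.add_mod_left]
  exact Nat.mod_eq_of_lt (by omega)

theorem iterate_ne_of_even (heven : bitPrefixSum x p % 2 = 0) {v w : Fin (2 * p)}
    (hv : v.val < 2) (hw : w.val < 2) (hvw : v ≠ w) (n m : ℕ) : f^[n] v ≠ f^[m] w := by
  have hp : 0 < p := by omega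
  have hperiodic (u : Fin (2 * p)) (hu : u.val < 2) : Function.IsPeriodicPt f p u :=
    Fin.ext (by rw [val_iterate_self hf hu]; omega)
  rw [← (hperiodic v hv).iterate_mod_apply, ← (hperiodic w hw).iterate_mod_apply]
  intro h
  have hval := congrArg Fin.val h
  have hn := Nat.mod_lt n hp
  have hm := Nat.mod_lt m hp
  rw [val_iterate_of_le hf hn.le hv, val_iterate_of_le hf hm.le hw,
    Nat.mod_eq_of_lt (show 2 * (n % p) + (v + bitPrefixSum x (n % p)) % 2 < 2 * p by omega),
    Nat.mod_eq_of_lt (show 2 * (m % p) + (w + bitPrefixSum x (m % p)) % 2 < 2 * p by omega)]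
    at hval
  have hnm : n % p = m % p := by omega
  rw [hnm] at hval
  exact hvw (Fin.ext (by omega))

end ParityShift

/-- The permutation `f(2i) = 2i + 2 + x_i`, `f(2i+1) = 2i + 3 - x_i` (mod `2p`)
has a single cycle when the parity of `x` is odd and exactly two cycles when
the parity of `x` is even. -/
theorem parity_graph_cycle_count (p : ℕ) (hp : 1 ≤ p) (x : Fin p → Bool)
    (f : Fin (2 * p) → Fin (2 * p))
    (hf : ∀ i : Fin p,
      f ⟨2 * i.val, by omega⟩ =
        ⟨(2 * i.val + 2 + (x i).toNat) % (2 * p), Nat.mod_lt _ (by omega)⟩ ∧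
      f ⟨2 * i.val + 1, by omega⟩ =
        ⟨(2 * i.val + 3 - (x i).toNat) % (2 * p), Nat.mod_lt _ (by omega)⟩) :
    Nat.card (Quotient (orbitSetoid f)) =
      if (∑ i, (x i).toNat) % 2 = 1 then 1 else 2 := by
  have hstep := val_apply_of_even_odd hf
  have hcover := exists_orbitSetoid_castLE hstep hp
  let start : Fin 2 → Fin (2 * p) := Fin.castLE (by omega)
  rw [← bitPrefixSum_self]
  split_ifs with hodd
  · have hswap : orbitSetoid f (start 1) (start 0) := by
      refine ⟨0, p, Fin.ext ?_⟩
      rw [val_iterate_self hstep (0 : Fin 2).isLt]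
      simp [start, hodd]
    rw [Setoid.card_quotient_eq_of_transversal (β := Unit) (fun _ => start 0), Nat.card_unique]
    · intro v
      obtain ⟨b, hb⟩ := hcover v
      fin_cases b
      exacts [⟨(), hb⟩, ⟨(), (orbitSetoid f).trans' hb hswap⟩]
    · exact fun _ _ _ => rfl
  · rw [Setoid.card_quotient_eq_of_transversal start hcover, Nat.card_eq_fintype_card,
      Fintype.card_fin]
    rintro b b' ⟨n, m, h⟩
    by_contra hne
    exact iterate_ne_of_even hstep (by omega) b.isLt b'.isLt
      (fun h' => hne (Fin.castLE_injective _ h')) n m h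
end

section
/- Let G = (V, E) be a directed graph in which every vertex has at least one out-neighbor, let A be a DFS spanning tree of G rooted at v₀ spanning all of V (vertices numbered in discovery order), and let B contain, for each vertex v_i, the edge from v_i to its out-neighbor of smallest discovery index. Then G is strongly connected if and only if the subgraph G' = (V, A ∪ B) is strongly connected. -/
/-!
If `G` is strongly connected, a path from any `v ≠ 0` back to the root must leave the DFS
subtree of `v`; by the DFS property the edge `x → y` by which it leaves has `y < v`, hence so
does `b x ≤ y`. Going down the tree from `v` to `x` and across the `B`-edge to `b x` therefore
reaches a smaller vertex inside `A ∪ B`, and induction on `v` brings every vertex to the root,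
from which the tree reaches everything. The converse holds because `A ∪ B ⊆ E`.
-/

theorem Relation.ReflTransGen.exists_rel_of_not {α : Type*} {r : α → α → Prop} {p : α → Prop}
    {a c : α} (h : Relation.ReflTransGen r a c) (ha : p a) (hc : ¬ p c) :
    ∃ x y, p x ∧ ¬ p y ∧ r x y := by
  induction h with
  | refl => exact absurd ha hc
  | @tail b c _ hbc ih =>
    by_cases hb : p b
    · exact ⟨b, c, hb, hc, hbc⟩
    · exact ih hb

namespace DFSTree

variable {n : ℕ} {E A : Fin n → Fin n → Prop} {fin : Fin n → ℕ}

theorem lt_of_edge_leaving_subtree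
    (hsub : ∀ v w : Fin n, Relation.ReflTransGen A v w ↔ (v ≤ w ∧ w.val ≤ fin v))
    (hwhite : ∀ u w : Fin n, E u w → u < w → w.val ≤ fin u)
    {v x y : Fin n} (hx : Relation.ReflTransGen A v x) (hy : ¬ Relation.ReflTransGen A v y)
    (hxy : E x y) : y < v := by
  by_contra! hvy
  have hfin_y : fin v < y.val := by
    by_contra! h
    exact hy ((hsub v y).2 ⟨hvy, h⟩)
  have hxy_lt : x < y := Fin.lt_def.2 (((hsub v x).1 hx).2.trans_lt hfin_y)
  exact hy (hx.trans ((hsub x y).2 ⟨hxy_lt.le, hwhite x y hxy hxy_lt⟩))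

theorem exists_subtree_edge_lt
    (hsub : ∀ v w : Fin n, Relation.ReflTransGen A v w ↔ (v ≤ w ∧ w.val ≤ fin v))
    (hwhite : ∀ u w : Fin n, E u w → u < w → w.val ≤ fin u)
    {v t : Fin n} (hvt : Relation.ReflTransGen E v t) (htv : t < v) :
    ∃ x y, Relation.ReflTransGen A v x ∧ E x y ∧ y < v := by
  have ht : ¬ Relation.ReflTransGen A v t := fun h => htv.not_ge ((hsub v t).1 h).1
  obtain ⟨x, y, hx, hy, hxy⟩ := hvt.exists_rel_of_not Relation.ReflTransGen.refl ht
  exact ⟨x, y, hx, hxy, lt_of_edge_leaving_subtree hsub hwhite hx hy hxy⟩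

theorem reflTransGen_tree_union_back_to_min {b : Fin n → Fin n}
    (hsub : ∀ v w : Fin n, Relation.ReflTransGen A v w ↔ (v ≤ w ∧ w.val ≤ fin v))
    (hwhite : ∀ u w : Fin n, E u w → u < w → w.val ≤ fin u)
    (hb : ∀ v w, E v w → b v ≤ w) {r : Fin n} (hr : ∀ v, r ≤ v)
    (hE : ∀ v, Relation.ReflTransGen E v r) (v : Fin n) :
    Relation.ReflTransGen (fun s t => A s t ∨ t = b s) v r := by
  induction v using WellFoundedLT.induction with
  | ind v ih =>
    rcases (hr v).eq_or_lt with rfl | hrv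
    · exact Relation.ReflTransGen.refl
    obtain ⟨x, y, hvx, hxy, hyv⟩ := exists_subtree_edge_lt hsub hwhite (hE v) hrv
    have hvbx : Relation.ReflTransGen (fun s t => A s t ∨ t = b s) v (b x) :=
      (Relation.ReflTransGen.mono (fun _ _ => Or.inl) _ _ hvx).tail (Or.inr rfl)
    exact hvbx.trans (ih (b x) ((hb x y hxy).trans_lt hyv))

end DFSTree

theorem strong_connectivity_iff_tree_union_backedges_general {n : ℕ} (hn : 0 < n)
    (E A : Fin n → Fin n → Prop) (fin : Fin n → ℕ) (b : Fin n → Fin n)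
    (hAE : ∀ u v, A u v → E u v)
    (hspan : ∀ v, Relation.ReflTransGen A ⟨0, hn⟩ v)
    (hsub : ∀ v w : Fin n,
      Relation.ReflTransGen A v w ↔ (v ≤ w ∧ w.val ≤ fin v))
    (hwhite : ∀ u w : Fin n, E u w → u < w → w.val ≤ fin u)
    (hb : ∀ v, E v (b v) ∧ ∀ w, E v w → b v ≤ w) :
    (∀ u v, Relation.ReflTransGen E u v) ↔
      (∀ u v, Relation.ReflTransGen (fun s t => A s t ∨ t = b s) u v) := by
  constructor
  · intro hE u v
    have hroot := DFSTree.reflTransGen_tree_union_back_to_min hsub hwhite (fun v => (hb v).2)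
      (fun _ => Nat.zero_le _) (fun v => hE v ⟨0, hn⟩) u
    exact hroot.trans (Relation.ReflTransGen.mono (fun _ _ => Or.inl) _ _ (hspan v))
  · intro h u v
    exact Relation.ReflTransGen.mono
      (fun s t hst => hst.elim (hAE s t) fun ht => ht ▸ (hb s).1) _ _ (h u v)

/-- Let `E` be the edge relation of a directed graph on vertices
`0, 1, …, n-1`, numbered in the order a depth-first search from vertex `0`
discovers them, in which every vertex has at least one out-neighbor.  Let
`A ⊆ E` be the DFS tree edges, spanning all of `V` ( `hspan` ), with `fin v`
the largest discovery index in the DFS subtree rooted at `v`, so that the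
subtree of `v` is the interval `[v, fin v]` (`hsub`), and with the DFS
property `hwhite` that every out-neighbor of `u` discovered after `u` lies in
the subtree of `u`.  Let `b v` be the out-neighbor of `v` of smallest
discovery index (`hb`), giving the set `B` of backward edges.  Then `G` is
strongly connected iff the subgraph with edge set `A ∪ B` is strongly
connected. -/
theorem strong_connectivity_iff_tree_union_backedges {n : ℕ} (hn : 0 < n)
    (E A : Fin n → Fin n → Prop) (fin : Fin n → ℕ) (b : Fin n → Fin n)
    (hAE : ∀ u v, A u v → E u v)
    (hout : ∀ v, ∃ w, E v w)
    (hspan : ∀ v, Relation.ReflTransGen A ⟨0, hn⟩ v)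
    (hsub : ∀ v w : Fin n,
      Relation.ReflTransGen A v w ↔ (v ≤ w ∧ w.val ≤ fin v))
    (hwhite : ∀ u w : Fin n, E u w → u < w → w.val ≤ fin u)
    (hb : ∀ v, E v (b v) ∧ ∀ w, E v w → b v ≤ w) :
    (∀ u v, Relation.ReflTransGen E u v) ↔
      (∀ u v, Relation.ReflTransGen (fun s t => A s t ∨ t = b s) u v) :=
  strong_connectivity_iff_tree_union_backedges_general hn E A fin b hAE hspan hsub hwhite hb
end

section
/- Let V = {v₀,...,v_{2p−1}} ∪ {u₀,...,u_{k−1}} and let f : V × [k] → V satisfy: f(u_i, 0) = v₀ and f(u_i, j) = u_{i+j mod k} for j ≥ 1; and for each i ∈ [p] there exist j₀, j₁ ∈ [k] and a bit b with f(v_{2i}, j₀) = v_{2i+2+b mod 2p}, f(v_{2i+1}, j₁) = v_{2i+3−b mod 2p}, all other values f(v_{2i}, j), f(v_{2i+1}, j) lying in {u₀,...,u_{k−1}}. Then the directed graph with edges {(v, f(v,j)) : v ∈ V, j ∈ [k]} is strongly connected if and only if v₁ is reachable from v₀. -/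
/-!
Every vertex has an out-edge into the clique (for `v_l` because `k ≥ 2` leaves an index other
than its forward one), and every clique vertex has an edge to `v₀`, so every vertex reaches `v₀`.
Conversely `v₀` reaches the clique, which is strongly connected, and once `v₀` reaches `v₁`, the
forward edges carry the pair `{v_{2i}, v_{2i+1}}` onto `{v_{2i+2}, v_{2i+3}}`, so
`v₀` reaches every `v_l`. Hence `v₀` is a hub through which any two vertices are connected.
-/

open Relation

def OutAdj {V ι : Type*} (f : V → ι → V) (s t : V) : Prop := ∃ j, f s j = t

theorem Fin.exists_eq_two_mul_or_eq_two_mul_add_one {p : ℕ} (l : Fin (2 * p)) :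
    ∃ i : Fin p, l = ⟨2 * i, by omega⟩ ∨ l = ⟨2 * i + 1, by omega⟩ :=
  ⟨⟨l / 2, by omega⟩, by
    rcases Nat.even_or_odd' l.val with ⟨i, h | h⟩ <;> simp [Fin.ext_iff] <;> omega⟩

theorem reflTransGen_of_levels {α : Type*} {r : α → α → Prop} {p : ℕ} (hp : 1 ≤ p)
    (v : Fin (2 * p) → α) (hv₁ : ReflTransGen r (v ⟨0, by omega⟩) (v ⟨1, by omega⟩))
    (hfwd : ∀ i : Fin p, ∃ b : Bool,
      r (v ⟨2 * i, by omega⟩) (v ⟨(2 * i + 2 + b.toNat) % (2 * p), Nat.mod_lt _ (by omega)⟩) ∧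
      r (v ⟨2 * i + 1, by omega⟩) (v ⟨(2 * i + 3 - b.toNat) % (2 * p), Nat.mod_lt _ (by omega)⟩))
    (l : Fin (2 * p)) : ReflTransGen r (v ⟨0, by omega⟩) (v l) := by
  have hpair : ∀ i (hi : i < p), ReflTransGen r (v ⟨0, by omega⟩) (v ⟨2 * i, by omega⟩) ∧
      ReflTransGen r (v ⟨0, by omega⟩) (v ⟨2 * i + 1, by omega⟩) := by
    intro i
    induction i with
    | zero => exact fun _ => ⟨.refl, hv₁⟩
    | succ i ih =>
      intro hi
      obtain ⟨h₀, h₁⟩ := ih (by omega)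
      obtain ⟨b, e₀, e₁⟩ := hfwd ⟨i, by omega⟩
      have hmod : ∀ m (hm : m < 2 * p), (⟨m % (2 * p), Nat.mod_lt _ (by omega)⟩ : Fin (2 * p)) =
          ⟨m, hm⟩ := fun m hm => Fin.ext (Nat.mod_eq_of_lt hm)
      cases b
      · rw [hmod _ (by simp; omega)] at e₀ e₁
        exact ⟨h₀.tail e₀, h₁.tail e₁⟩
      · rw [hmod _ (by simp; omega)] at e₀ e₁
        exact ⟨h₁.tail e₁, h₀.tail e₀⟩
  obtain ⟨i, rfl | rfl⟩ := l.exists_eq_two_mul_or_eq_two_mul_add_one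
  exacts [(hpair i i.isLt).1, (hpair i i.isLt).2]

theorem reflTransGen_outAdj_inr_inr {α : Type*} {k : ℕ} [NeZero k]
    {f : α ⊕ Fin k → Fin k → α ⊕ Fin k}
    (hclique : ∀ i j : Fin k, j ≠ 0 → f (.inr i) j = .inr (i + j)) (a b : Fin k) :
    ReflTransGen (OutAdj f) (.inr a) (.inr b) := by
  obtain rfl | hab := eq_or_ne a b
  · exact .refl
  · exact .single ⟨b - a, by rw [hclique a _ (sub_ne_zero.mpr hab.symm), add_sub_cancel]⟩

/-- The vertex `v_l` is `Sum.inl l`, the clique vertex `u_i` is `Sum.inr i`, and `f v j` is the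
`j`-th out-neighbour of `v`. -/
theorem list_model_strongly_connected_iff_v1_reachable
    (p k : ℕ) (hp : 1 ≤ p) (hk : 2 ≤ k)
    (f : (Fin (2 * p) ⊕ Fin k) → Fin k → (Fin (2 * p) ⊕ Fin k))
    (hclique0 : ∀ i : Fin k, f (Sum.inr i) ⟨0, by omega⟩ = Sum.inl ⟨0, by omega⟩)
    (hclique : ∀ i j : Fin k, j ≠ ⟨0, by omega⟩ →
      f (Sum.inr i) j = Sum.inr (i + j))
    (hlevels : ∀ i : Fin p, ∃ j₀ j₁ : Fin k, ∃ b : Bool,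
      f (Sum.inl ⟨2 * i.val, by omega⟩) j₀ =
        Sum.inl ⟨(2 * i.val + 2 + b.toNat) % (2 * p), Nat.mod_lt _ (by omega)⟩ ∧
      f (Sum.inl ⟨2 * i.val + 1, by omega⟩) j₁ =
        Sum.inl ⟨(2 * i.val + 3 - b.toNat) % (2 * p), Nat.mod_lt _ (by omega)⟩ ∧
      (∀ j : Fin k, j ≠ j₀ → ∃ u : Fin k,
        f (Sum.inl ⟨2 * i.val, by omega⟩) j = Sum.inr u) ∧
      (∀ j : Fin k, j ≠ j₁ → ∃ u : Fin k,
        f (Sum.inl ⟨2 * i.val + 1, by omega⟩) j = Sum.inr u)) :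
    (∀ u v : Fin (2 * p) ⊕ Fin k,
        Relation.ReflTransGen (fun s t => ∃ j, f s j = t) u v) ↔
      Relation.ReflTransGen (fun s t => ∃ j, f s j = t)
        (Sum.inl ⟨0, by omega⟩) (Sum.inl ⟨1, by omega⟩) := by
  refine ⟨fun h => h _ _, fun hv₁ => ?_⟩
  have : NeZero k := ⟨by omega⟩
  have : Nontrivial (Fin k) := Fin.nontrivial_iff_two_le.mpr hk
  set v₀ : Fin (2 * p) ⊕ Fin k := .inl ⟨0, by omega⟩
  have hclique_v₀ : ∀ u, OutAdj f (.inr u) v₀ := fun u => ⟨_, hclique0 u⟩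
  have hback : ∀ l, ∃ u, OutAdj f (.inl l) (.inr u) := by
    intro l
    obtain ⟨i, rfl | rfl⟩ := l.exists_eq_two_mul_or_eq_two_mul_add_one
    all_goals obtain ⟨j₀, j₁, -, -, -, h₀, h₁⟩ := hlevels i
    · obtain ⟨u, hu⟩ := h₀ _ (exists_ne j₀).choose_spec
      exact ⟨u, _, hu⟩
    · obtain ⟨u, hu⟩ := h₁ _ (exists_ne j₁).choose_spec
      exact ⟨u, _, hu⟩
  have hto : ∀ w, ReflTransGen (OutAdj f) w v₀ := by
    rintro (l | u)
    · obtain ⟨u, hu⟩ := hback l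
      exact .head hu (.single (hclique_v₀ u))
    · exact .single (hclique_v₀ u)
  have hfrom : ∀ w, ReflTransGen (OutAdj f) v₀ w := by
    rintro (l | u)
    · refine reflTransGen_of_levels hp Sum.inl hv₁ (fun i => ?_) l
      obtain ⟨j₀, j₁, b, h₀, h₁, -⟩ := hlevels i
      exact ⟨b, ⟨j₀, h₀⟩, ⟨j₁, h₁⟩⟩
    · obtain ⟨u', hu'⟩ := hback ⟨0, by omega⟩
      exact .head hu' (reflTransGen_outAdj_inr_inr hclique u' u)
  exact fun u w => (hto u).trans (hfrom w)
end
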